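/- Let Γ be a finite connected tetravalent graph and M ≤ Aut(Γ) such that Γ is M-half-arc-transitive. Then for every vertex u of Γ, the stabilizer M_u is a 2-group. -/

import Mathlib

open SimpleGraph

variable {V : Type*}

/-- The automorphism group of a simple graph, as a subgroup of the group of
permutations of the vertex set. -/
def autGroup (Γ : SimpleGraph V) : Subgroup (Equiv.Perm V) where
  carrier := {g | ∀ u v : V, Γ.Adj (g u) (g v) ↔ Γ.Adj u v}
  one_mem' := by intro u v; simp
  mul_mem' := by
    intro a b ha hb u v
    rw [Equiv.Perm.mul_apply, Equiv.Perm.mul_apply, ha, hb]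
  inv_mem' := by
    intro a ha u v
    simpa using (ha (a⁻¹ u) (a⁻¹ v)).symm

/-- `M` is transitive on the vertices of a graph on `V`. -/
def VertexTransitive (_Γ : SimpleGraph V) (M : Subgroup (Equiv.Perm V)) : Prop :=
  ∀ u v : V, ∃ g ∈ M, g u = v

/-- `M` is transitive on the edges of `Γ`. -/
def EdgeTransitive (Γ : SimpleGraph V) (M : Subgroup (Equiv.Perm V)) : Prop :=
  ∀ u v x y : V, Γ.Adj u v → Γ.Adj x y →
    ∃ g ∈ M, (g u = x ∧ g v = y) ∨ (g u = y ∧ g v = x)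

/-- `M` is transitive on the arcs (ordered pairs of adjacent vertices) of `Γ`. -/
def ArcTransitive (Γ : SimpleGraph V) (M : Subgroup (Equiv.Perm V)) : Prop :=
  ∀ u v x y : V, Γ.Adj u v → Γ.Adj x y → ∃ g ∈ M, g u = x ∧ g v = y

/-- `Γ` is `M`-half-arc-transitive: `M` consists of automorphisms of `Γ` and is
vertex- and edge- but not arc-transitive. -/
def HalfArcTransitive (Γ : SimpleGraph V) (M : Subgroup (Equiv.Perm V)) : Prop :=
  M ≤ autGroup Γ ∧ VertexTransitive Γ M ∧ EdgeTransitive Γ M ∧ ¬ ArcTransitive Γ M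

/-- `p`, restricted to `{0, …, s}`, is an `s`-arc of `Γ`. -/
def IsSArc (Γ : SimpleGraph V) (s : ℕ) (p : ℕ → V) : Prop :=
  (∀ i < s, Γ.Adj (p i) (p (i + 1))) ∧ ∀ j, 1 ≤ j → j < s → p (j - 1) ≠ p (j + 1)

/-- `Γ` is `(H, t)`-arc-transitive: `H` consists of automorphisms of `Γ` and is
transitive on the `t`-arcs of `Γ`. -/
def SArcTransitive (Γ : SimpleGraph V) (H : Subgroup (Equiv.Perm V)) (t : ℕ) : Prop :=
  H ≤ autGroup Γ ∧ ∀ p q : ℕ → V, IsSArc Γ t p → IsSArc Γ t q →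
    ∃ g ∈ H, ∀ i ≤ t, g (p i) = q i

/-- `Γ` is `(H, t)`-transitive: `(H, t)`-arc-transitive but not `(H, t+1)`-arc-transitive. -/
def STransitive (Γ : SimpleGraph V) (H : Subgroup (Equiv.Perm V)) (t : ℕ) : Prop :=
  SArcTransitive Γ H t ∧ ¬ SArcTransitive Γ H (t + 1)

/-- `M` is a maximal subgroup of `H`. -/
def IsMaximalSubgroup {G : Type*} [Group G] (M H : Subgroup G) : Prop :=
  M < H ∧ ∀ N : Subgroup G, M ≤ N → N ≤ H → N = M ∨ N = H

/-- `(M, H)` is a maximal `(1/2, t)`-pair of `Γ`: `M` is a maximal subgroup of `H`,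
`Γ` is `M`-half-arc-transitive, and `Γ` is `(H, t)`-transitive. -/
def MaximalHalfPair (Γ : SimpleGraph V) (M H : Subgroup (Equiv.Perm V)) (t : ℕ) : Prop :=
  IsMaximalSubgroup M H ∧ HalfArcTransitive Γ M ∧ STransitive Γ H t

/-- `Γ` is regular of valency `4`. -/
def Tetravalent (Γ : SimpleGraph V) : Prop := ∀ v : V, (Γ.neighborSet v).ncard = 4

/-- `M` is a normal subgroup of `H` (both given as subgroups of an ambient group). -/
def NormalIn {G : Type*} [Group G] (M H : Subgroup G) : Prop :=
  ∀ h ∈ H, ∀ m ∈ M, h * m * h⁻¹ ∈ M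

/-- The normal core of `M` in `H` (for `M ≤ H`): the largest normal subgroup of `H`
contained in `M`, namely the intersection of the `H`-conjugates of `M`. -/
def coreIn {G : Type*} [Group G] (H M : Subgroup G) : Subgroup G where
  carrier := {g | ∀ h ∈ H, h⁻¹ * g * h ∈ M}
  one_mem' := by intro h hh; simpa using M.one_mem
  mul_mem' := by
    intro a b ha hb h hh
    have e : h⁻¹ * (a * b) * h = (h⁻¹ * a * h) * (h⁻¹ * b * h) := by group
    rw [e]; exact M.mul_mem (ha h hh) (hb h hh)
  inv_mem' := by
    intro a ha h hh
    have e : h⁻¹ * a⁻¹ * h = (h⁻¹ * a * h)⁻¹ := by group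
    rw [e]; exact M.inv_mem (ha h hh)

/-- `K` is semiregular on `V`: all point stabilizers are trivial. -/
def Semiregular (K : Subgroup (Equiv.Perm V)) : Prop :=
  ∀ g ∈ K, ∀ v : V, g v = v → g = 1

/-- The normal quotient graph `Γ_K`: vertices are the `K`-orbits on `V`, two distinct
orbits being adjacent iff `Γ` has an edge between them. -/
def quotientGraph (Γ : SimpleGraph V) (K : Subgroup (Equiv.Perm V)) :
    SimpleGraph (Quotient (MulAction.orbitRel K V)) where
  Adj x y := x ≠ y ∧ ∃ u v : V, Γ.Adj u v ∧
      Quotient.mk (MulAction.orbitRel K V) u = x ∧ Quotient.mk (MulAction.orbitRel K V) v = y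
  symm := ⟨by
    rintro x y ⟨hxy, u, v, h, hu, hv⟩
    exact ⟨hxy.symm, v, u, h.symm, hv, hu⟩⟩
  loopless := ⟨fun x h => h.1 rfl⟩

/-- The set of elements of `H` stabilizing every `K`-orbit, i.e. the kernel of the
action of `H` on the vertex set of the normal quotient graph `Γ_K`. -/
def quotKernelSet (H K : Subgroup (Equiv.Perm V)) : Set (Equiv.Perm V) :=
  {h | h ∈ H ∧ ∀ v : V, h v ∈ MulAction.orbit K v}

/-- The permutation group induced by `H` on the set of `K`-orbits; when `K` is the
kernel of the action of `H` on the set of `K`-orbits, this is (a faithful copy of)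
the quotient group `H/K` acting on the normal quotient graph `Γ_K`. -/
def inducedQuot (K H : Subgroup (Equiv.Perm V)) :
    Subgroup (Equiv.Perm (Quotient (MulAction.orbitRel K V))) where
  carrier := {σ | ∃ h ∈ H, ∀ v : V,
    σ (Quotient.mk (MulAction.orbitRel K V) v) = Quotient.mk (MulAction.orbitRel K V) (h v)}
  one_mem' := ⟨1, H.one_mem, fun v => by simp⟩
  mul_mem' := by
    rintro σ τ ⟨g, hg, hσ⟩ ⟨k, hk, hτ⟩
    refine ⟨g * k, H.mul_mem hg hk, fun v => ?_⟩
    rw [Equiv.Perm.mul_apply, hτ v, hσ (k v), Equiv.Perm.mul_apply]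
  inv_mem' := by
    rintro σ ⟨g, hg, hσ⟩
    refine ⟨g⁻¹, H.inv_mem hg, fun v => ?_⟩
    have h1 := hσ (g⁻¹ v)
    rw [show ∀ x, g (g⁻¹ x) = x from fun x => by simp] at h1
    rw [← h1, show ∀ x, σ⁻¹ (σ x) = x from fun x => by simp]

/-- The permutation group `M_u^{Γ(u)}` induced on the neighbourhood `Γ(u)` by the
vertex stabilizer `M_u`. -/
def localGroup (Γ : SimpleGraph V) (M : Subgroup (Equiv.Perm V)) (u : V) :
    Subgroup (Equiv.Perm (Γ.neighborSet u)) where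
  carrier := {σ | ∃ g ∈ M, g u = u ∧ ∀ v : Γ.neighborSet u, (σ v : V) = g (v : V)}
  one_mem' := ⟨1, M.one_mem, by simp, fun v => by simp⟩
  mul_mem' := by
    rintro σ τ ⟨g, hg, hgu, hσ⟩ ⟨k, hk, hku, hτ⟩
    refine ⟨g * k, M.mul_mem hg hk, by rw [Equiv.Perm.mul_apply, hku, hgu], fun v => ?_⟩
    simp only [Equiv.Perm.mul_apply]
    rw [hσ (τ v), hτ v]
  inv_mem' := by
    rintro σ ⟨g, hg, hgu, hσ⟩
    have hgu' : g⁻¹ u = u := g.injective (by rw [show ∀ x, g (g⁻¹ x) = x from fun x => by simp, hgu])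
    refine ⟨g⁻¹, M.inv_mem hg, hgu', fun v => ?_⟩
    have h1 := hσ (σ⁻¹ v)
    rw [show ∀ x, σ (σ⁻¹ x) = x from fun x => by simp] at h1
    rw [h1, show ∀ x, g⁻¹ (g x) = x from fun x => by simp]

/-- The kernel `M_u^{[1]}` of the action of the vertex stabilizer `M_u` on the
neighbourhood `Γ(u)`, as a subgroup of `Equiv.Perm V`. -/
def localKernel (Γ : SimpleGraph V) (M : Subgroup (Equiv.Perm V)) (u : V) :
    Subgroup (Equiv.Perm V) :=
  (M ⊓ MulAction.stabilizer (Equiv.Perm V) u) ⊓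
    ⨅ v ∈ Γ.neighborSet u, MulAction.stabilizer (Equiv.Perm V) v

/-- The complete bipartite graph `K_{5,5}` minus a perfect matching. -/
def K55minusMatching : SimpleGraph (Fin 2 × Fin 5) where
  Adj x y := x.1 ≠ y.1 ∧ x.2 ≠ y.2
  symm := ⟨by rintro x y ⟨h1, h2⟩; exact ⟨h1.symm, h2.symm⟩⟩
  loopless := ⟨fun x h => h.1 rfl⟩

instance : Fact (Nat.Prime 5) := ⟨by norm_num⟩
instance : Fact (Nat.Prime 7) := ⟨by norm_num⟩

/-- The one-dimensional affine group `AGL_1(p)`: the group of affine permutations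
`x ↦ a * x + b` (`a ≠ 0`) of `ZMod p`.  It is isomorphic to `Z_p ⋊ Z_{p-1}` with the
faithful action; for `p = 5` it is the Frobenius group `Z_5 ⋊ Z_4` of order `20`. -/
def AGL1 (p : ℕ) [Fact (Nat.Prime p)] : Subgroup (Equiv.Perm (ZMod p)) where
  carrier := {f | ∃ a b : ZMod p, a ≠ 0 ∧ ∀ x, f x = a * x + b}
  one_mem' := ⟨1, 0, one_ne_zero, fun x => by simp⟩
  mul_mem' := by
    rintro f g ⟨a1, b1, ha1, hf⟩ ⟨a2, b2, ha2, hg⟩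
    refine ⟨a1 * a2, a1 * b2 + b1, mul_ne_zero ha1 ha2, fun x => ?_⟩
    rw [Equiv.Perm.mul_apply, hg, hf]
    ring
  inv_mem' := by
    rintro f ⟨a, b, ha, hf⟩
    refine ⟨a⁻¹, -(a⁻¹ * b), inv_ne_zero ha, fun x => ?_⟩
    have h1 : f (a⁻¹ * x + -(a⁻¹ * b)) = x := by
      rw [hf]
      field_simp
      ring
    rw [← h1, show ∀ y, f⁻¹ (f y) = y from fun y => by simp, h1]

/-- The Cayley graph `Cay(G, S)`: for an inverse-closed `S ⊆ G \ {1}`, `x` and `y`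
are adjacent iff `y * x⁻¹ ∈ S`. -/
def cayleyGraph (G : Type*) [Group G] (S : Set G) : SimpleGraph G :=
  SimpleGraph.fromRel (fun x y => y * x⁻¹ ∈ S)

/-- The image `R(G)` of the right regular representation of `G` in `Equiv.Perm G`. -/
def rightRegular (G : Type*) [Group G] : Subgroup (Equiv.Perm G) where
  carrier := {σ | ∃ g : G, ∀ x : G, σ x = x * g}
  one_mem' := ⟨1, fun x => by simp⟩
  mul_mem' := by
    rintro σ τ ⟨g, hσ⟩ ⟨k, hτ⟩
    exact ⟨k * g, fun x => by rw [Equiv.Perm.mul_apply, hτ, hσ, mul_assoc]⟩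
  inv_mem' := by
    rintro σ ⟨g, hσ⟩
    refine ⟨g⁻¹, fun x => ?_⟩
    have h1 : σ (x * g⁻¹) = x := by rw [hσ, inv_mul_cancel_right]
    rw [← h1, show ∀ y, σ⁻¹ (σ y) = y from fun y => by simp, h1]

/-- The coordinate-swapping automorphism of `A × A`. -/
def swapAut (A : Type*) [Group A] : MulAut (A × A) := MulEquiv.prodComm

lemma swapAut_sq (A : Type*) [Group A] : swapAut A ^ 2 = 1 := by
  rw [pow_two]
  exact MulEquiv.ext fun p => rfl

/-- The homomorphism `Z_2 →* Aut(A × A)` sending the generator to the coordinate swap. -/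
def swapHom (A : Type*) [Group A] : Multiplicative (ZMod 2) →* MulAut (A × A) where
  toFun x := swapAut A ^ (Multiplicative.toAdd x).val
  map_one' := by simp
  map_mul' x y := by
    have h2 : swapAut A ^ 2 = 1 := swapAut_sq A
    show swapAut A ^ (Multiplicative.toAdd (x * y)).val = _
    have e : Multiplicative.toAdd (x * y) = Multiplicative.toAdd x + Multiplicative.toAdd y := rfl
    rw [e, ZMod.val_add, ← pow_eq_pow_mod _ h2, pow_add]

/-- The semidirect product `(A × A) ⋊ Z_2` in which `Z_2` swaps the two direct
factors; for a group `A` this is the wreath product `A ≀ Z_2`. -/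
abbrev wreathZ2 (A : Type*) [Group A] :=
  SemidirectProduct (A × A) (Multiplicative (ZMod 2)) (swapHom A)

/-- The projective general linear group `PGL_2(7) = GL_2(7)/Z(GL_2(7))`. -/
abbrev PGL2_7 :=
  Matrix.GeneralLinearGroup (Fin 2) (ZMod 7) ⧸
    Subgroup.center (Matrix.GeneralLinearGroup (Fin 2) (ZMod 7))

/-- The semidirect product `Z_3 ⋊ S_4` of order 72 in which the kernel of the action
of `S_4` on `Z_3` is `A_4`: concretely, the subgroup of `S_3 × S_4` consisting of the
pairs of permutations of equal sign. -/
def Z3rtimesS4 : Subgroup (Equiv.Perm (Fin 3) × Equiv.Perm (Fin 4)) :=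
  MonoidHom.ker ((Equiv.Perm.sign.comp (MonoidHom.fst (Equiv.Perm (Fin 3)) (Equiv.Perm (Fin 4)))) *
    (Equiv.Perm.sign.comp (MonoidHom.snd (Equiv.Perm (Fin 3)) (Equiv.Perm (Fin 4)))))

/-- `C` is (the vertex set of) an `M`-alternating cycle of `Γ`: a cycle along which
any two consecutive arcs lie in different `M`-orbits, i.e. consecutive edges have
opposite orientations in the orientations of `Γ` given by the two `M`-orbits on arcs. -/
def IsAltCycle (Γ : SimpleGraph V) (M : Subgroup (Equiv.Perm V)) (C : Set V) : Prop :=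
  ∃ n : ℕ, 3 ≤ n ∧ ∃ c : ZMod n → V, Function.Injective c ∧ Set.range c = C ∧
    (∀ i, Γ.Adj (c i) (c (i + 1))) ∧
    (∀ i, ¬ ∃ g ∈ M, g (c i) = c (i + 1) ∧ g (c (i + 1)) = c (i + 2))

/-- The graph `Alt_M(Γ)` of `M`-alternating cycles: vertices are the `M`-alternating
cycles of `Γ`, two of them being adjacent iff they have a common vertex. -/
def altGraph (Γ : SimpleGraph V) (M : Subgroup (Equiv.Perm V)) :
    SimpleGraph {C : Set V // IsAltCycle Γ M C} where
  Adj C D := C ≠ D ∧ (C.1 ∩ D.1).Nonempty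
  symm := ⟨by
    rintro C D ⟨h1, x, hx⟩
    exact ⟨h1.symm, x, hx.2, hx.1⟩⟩
  loopless := ⟨fun C h => h.1 rfl⟩


theorem Equiv.Perm.inv_apply_self {α : Type*} (f : Equiv.Perm α) (x : α) : f⁻¹ (f x) = x := by
  simp

theorem Equiv.Perm.apply_inv_self {α : Type*} (f : Equiv.Perm α) (x : α) : f (f⁻¹ x) = x := by
  simp

section AuxHAT

variable {V : Type*}

/-- On an invariant 2-element set, the square of a permutation acts trivially. -/
lemma auxTwoSet {α : Type*} (g : Equiv.Perm α) (S : Set α) (h2 : S.ncard = 2)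
    (hS : ∀ z ∈ S, g z ∈ S) (w : α) (hw : w ∈ S) : g (g w) = w := by
  obtain ⟨x, y, hxy, rfl⟩ := Set.ncard_eq_two.mp h2
  have hx := hS x (by simp)
  have hy := hS y (by simp)
  simp only [Set.mem_insert_iff, Set.mem_singleton_iff] at hx hy hw
  rcases hw with rfl | rfl
  · rcases hx with h | h
    · rw [h, h]
    · rw [h]
      rcases hy with h' | h'
      · exact h'
      · exact absurd (g.injective (h.trans h'.symm)) hxy
  · rcases hy with h | h
    · rcases hx with h' | h'
      · exact absurd (g.injective (h'.trans h.symm)) hxy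
      · rw [h, h']
    · rw [h, h]

lemma perm_pow_fix {α : Type*} (σ : Equiv.Perm α) (v : α) (h : σ v = v) :
    ∀ n : ℕ, (σ ^ n) v = v := by
  intro n
  induction n with
  | zero => simp
  | succ n ih => rw [pow_succ, Equiv.Perm.mul_apply, h, ih]

/-- In an `M`-half-arc-transitive graph, no element of `M` swaps two adjacent
vertices. -/
lemma auxNoSwap (Γ : SimpleGraph V) (M : Subgroup (Equiv.Perm V))
    (hhat : HalfArcTransitive Γ M) :
    ∀ s ∈ M, ∀ x y : V, Γ.Adj x y → s x = y → s y = x → False := by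
  obtain ⟨hle, hvt, het, hnat⟩ := hhat
  intro s hs x y hxy hsx hsy
  apply hnat
  intro u v z w huv hzw
  obtain ⟨h, hh, hc⟩ := het u v z w huv hzw
  rcases hc with ⟨h1, h2⟩ | ⟨h1, h2⟩
  · exact ⟨h, hh, h1, h2⟩
  · -- h u = w, h v = z; build an element of M swapping z and w
    obtain ⟨k, hk, hkc⟩ := het x y z w hxy hzw
    have hswap : ∃ t ∈ M, t z = w ∧ t w = z := by
      refine ⟨k * s * k⁻¹, M.mul_mem (M.mul_mem hk hs) (M.inv_mem hk), ?_⟩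
      rcases hkc with ⟨k1, k2⟩ | ⟨k1, k2⟩
      · constructor
        · show k (s (k⁻¹ z)) = w
          rw [← k1, Equiv.Perm.inv_apply_self, hsx, k2]
        · show k (s (k⁻¹ w)) = z
          rw [← k2, Equiv.Perm.inv_apply_self, hsy, k1]
      · constructor
        · show k (s (k⁻¹ z)) = w
          rw [← k2, Equiv.Perm.inv_apply_self, hsy, k1]
        · show k (s (k⁻¹ w)) = z
          rw [← k1, Equiv.Perm.inv_apply_self, hsx, k2]
    obtain ⟨t, ht, t1, t2⟩ := hswap
    refine ⟨t * h, M.mul_mem ht hh, ?_, ?_⟩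
    · show t (h u) = z
      rw [h1, t2]
    · show t (h v) = w
      rw [h2, t1]

/-- The key local lemma: in a tetravalent `M`-half-arc-transitive graph, the square
of any element of a vertex stabilizer fixes every neighbour of that vertex. -/
lemma auxLocalSq [Fintype V] (Γ : SimpleGraph V) (htetra : Tetravalent Γ)
    (M : Subgroup (Equiv.Perm V)) (hhat : HalfArcTransitive Γ M) :
    ∀ g ∈ M, ∀ a : V, g a = a → ∀ w : V, Γ.Adj a w → g (g w) = w := by
  classical
  have noswap := auxNoSwap Γ M hhat
  obtain ⟨hle, hvt, het, hnat⟩ := hhat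
  intro g hg a hga
  -- base arc at a
  have hne : (Γ.neighborSet a).Nonempty := by
    apply Set.nonempty_of_ncard_ne_zero
    rw [htetra a]; norm_num
  obtain ⟨v₀, hv₀⟩ := hne
  have hav₀ : Γ.Adj a v₀ := hv₀
  -- the orbit of the arc (a, v₀)
  set O : Set (V × V) := {p | ∃ m ∈ M, m a = p.1 ∧ m v₀ = p.2} with hOdef
  have hOinv : ∀ n ∈ M, ∀ p : V × V, p ∈ O → (n p.1, n p.2) ∈ O := by
    rintro n hn p ⟨m, hm, h1, h2⟩
    exact ⟨n * m, M.mul_mem hn hm, by rw [Equiv.Perm.mul_apply, h1],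
      by rw [Equiv.Perm.mul_apply, h2]⟩
  have hOadj : ∀ p ∈ O, Γ.Adj p.1 p.2 := by
    rintro p ⟨m, hm, h1, h2⟩
    rw [← h1, ← h2]
    exact (hle hm a v₀).mpr hav₀
  have htrich : ∀ x y : V, Γ.Adj x y → (x, y) ∈ O ∨ (y, x) ∈ O := by
    intro x y hxy
    obtain ⟨m, hm, hc⟩ := het a v₀ x y hav₀ hxy
    rcases hc with ⟨h1, h2⟩ | ⟨h1, h2⟩
    · exact Or.inl ⟨m, hm, h1, h2⟩
    · exact Or.inr ⟨m, hm, h1, h2⟩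
  have hnotboth : ∀ x y : V, (x, y) ∈ O → (y, x) ∈ O → False := by
    rintro x y ⟨m, hm, h1, h2⟩ ⟨m', hm', h1', h2'⟩
    dsimp only at h1 h2 h1' h2'
    apply noswap (m' * m⁻¹) (M.mul_mem hm' (M.inv_mem hm)) x y
      (hOadj (x, y) ⟨m, hm, h1, h2⟩)
    · show m' (m⁻¹ x) = y
      rw [← h1, Equiv.Perm.inv_apply_self, h1']
    · show m' (m⁻¹ y) = x
      rw [← h2, Equiv.Perm.inv_apply_self, h2']
  set Out : V → Set V := fun x => {w | (x, w) ∈ O} with hOut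
  set Inn : V → Set V := fun x => {w | (w, x) ∈ O} with hInn
  have hsplit : ∀ x : V, Γ.neighborSet x = Out x ∪ Inn x := by
    intro x
    ext w
    constructor
    · intro hw
      exact htrich x w hw
    · rintro (hw | hw)
      · exact hOadj (x, w) hw
      · exact (hOadj (w, x) hw).symm
  have hdisj : ∀ x : V, Disjoint (Out x) (Inn x) := by
    intro x
    rw [Set.disjoint_left]
    intro w hw1 hw2
    exact hnotboth x w hw1 hw2
  have hcardsum : ∀ x : V, (Out x).ncard + (Inn x).ncard = 4 := by
    intro x
    rw [← Set.ncard_union_eq (hdisj x) (Set.toFinite _) (Set.toFinite _), ← hsplit,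
      htetra x]
  have hOutmap : ∀ n ∈ M, ∀ x : V, Out (n x) = n '' Out x := by
    intro n hn x
    ext w
    constructor
    · intro hw
      have := hOinv n⁻¹ (M.inv_mem hn) (n x, w) hw
      simp only [Equiv.Perm.inv_apply_self] at this
      exact ⟨n⁻¹ w, this, by simp⟩
    · rintro ⟨w', hw', rfl⟩
      exact hOinv n hn (x, w') hw'
  have hInnmap : ∀ n ∈ M, ∀ x : V, Inn (n x) = n '' Inn x := by
    intro n hn x
    ext w
    constructor
    · intro hw
      have := hOinv n⁻¹ (M.inv_mem hn) (w, n x) hw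
      simp only [Equiv.Perm.inv_apply_self] at this
      exact ⟨n⁻¹ w, this, by simp⟩
    · rintro ⟨w', hw', rfl⟩
      exact hOinv n hn (w', x) hw'
  have hOutcard : ∀ x y : V, (Out x).ncard = (Out y).ncard := by
    intro x y
    obtain ⟨n, hn, rfl⟩ := hvt x y
    rw [hOutmap n hn x, Set.ncard_image_of_injective _ n.injective]
  have hInncard : ∀ x y : V, (Inn x).ncard = (Inn y).ncard := by
    intro x y
    obtain ⟨n, hn, rfl⟩ := hvt x y
    rw [hInnmap n hn x, Set.ncard_image_of_injective _ n.injective]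
  -- counting: the sum of out-degrees equals the sum of in-degrees
  have hcount : (Out a).ncard = (Inn a).ncard := by
    have hfin : O.Finite := Set.toFinite O
    set F : Finset (V × V) := hfin.toFinset with hF
    have hsum1 : F.card = ∑ x : V, (Out x).ncard := by
      rw [Finset.card_eq_sum_card_fiberwise
        (f := Prod.fst) (t := Finset.univ) (fun p _ => Finset.mem_univ _)]
      refine Finset.sum_congr rfl fun x _ => ?_
      have : F.filter (fun p => p.1 = x)
          = ((Set.toFinite (Out x)).toFinset).image (fun w => (x, w)) := by
        ext p
        simp only [Finset.mem_filter, Finset.mem_image, Set.Finite.mem_toFinset, hF]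
        constructor
        · rintro ⟨hp, rfl⟩
          exact ⟨p.2, hp, rfl⟩
        · rintro ⟨w, hw, rfl⟩
          exact ⟨hw, rfl⟩
      rw [this, Finset.card_image_of_injective _ (fun w w' h => congrArg Prod.snd h),
        Set.ncard_eq_toFinset_card _ (Set.toFinite (Out x))]
    have hsum2 : F.card = ∑ x : V, (Inn x).ncard := by
      rw [Finset.card_eq_sum_card_fiberwise
        (f := Prod.snd) (t := Finset.univ) (fun p _ => Finset.mem_univ _)]
      refine Finset.sum_congr rfl fun x _ => ?_
      have : F.filter (fun p => p.2 = x)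
          = ((Set.toFinite (Inn x)).toFinset).image (fun w => (w, x)) := by
        ext p
        simp only [Finset.mem_filter, Finset.mem_image, Set.Finite.mem_toFinset, hF]
        constructor
        · rintro ⟨hp, rfl⟩
          exact ⟨p.1, hp, rfl⟩
        · rintro ⟨w, hw, rfl⟩
          exact ⟨hw, rfl⟩
      rw [this, Finset.card_image_of_injective _ (fun w w' h => congrArg Prod.fst h),
        Set.ncard_eq_toFinset_card _ (Set.toFinite (Inn x))]
    have heq : ∑ x : V, (Out x).ncard = ∑ x : V, (Inn x).ncard := by
      rw [← hsum1, ← hsum2]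
    rw [Finset.sum_congr rfl (fun y _ => hOutcard y a),
      Finset.sum_congr rfl (fun y _ => hInncard y a),
      Finset.sum_const, Finset.sum_const, smul_eq_mul, smul_eq_mul] at heq
    have hpos : 0 < Fintype.card V := Fintype.card_pos_iff.mpr ⟨a⟩
    rw [Finset.card_univ] at heq
    exact Nat.eq_of_mul_eq_mul_left hpos heq
  have hOut2 : (Out a).ncard = 2 := by
    have := hcardsum a
    omega
  have hInn2 : (Inn a).ncard = 2 := by
    have := hcardsum a
    omega
  -- finish
  intro w haw
  have hw : w ∈ Out a ∪ Inn a := by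
    rw [← hsplit]
    exact haw
  rcases hw with hw | hw
  · refine auxTwoSet g (Out a) hOut2 (fun z hz => ?_) w hw
    have := hOinv g hg (a, z) hz
    rwa [hga] at this
  · refine auxTwoSet g (Inn a) hInn2 (fun z hz => ?_) w hw
    have := hOinv g hg (z, a) hz
    rwa [hga] at this

/-- Propagation of fixing along a walk. -/
lemma auxWalkFix [Fintype V] (Γ : SimpleGraph V) (M : Subgroup (Equiv.Perm V))
    (hsq : ∀ g ∈ M, ∀ a : V, g a = a → ∀ w : V, Γ.Adj a w → g (g w) = w) :
    ∀ {a b : V} (p : Γ.Walk a b) (g : Equiv.Perm V), g ∈ M → g a = a →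
      (g ^ 2 ^ p.length) b = b := by
  intro a b p
  induction p with
  | nil =>
    intro g hg hga
    simpa using hga
  | @cons a c b h q ih =>
    intro g hg hga
    have hc : (g ^ 2) c = c := by
      rw [pow_two, Equiv.Perm.mul_apply]
      exact hsq g hg a hga c h
    have := ih (g ^ 2) (pow_mem hg 2) hc
    rw [Walk.length_cons, pow_succ', pow_mul]
    exact this

end AuxHAT

/-- If a connected tetravalent graph is `M`-half-arc-transitive, then every vertex
stabilizer `M_u` is a `2`-group. -/
theorem statement10 {V : Type*} [Fintype V] (Γ : SimpleGraph V)
    (hconn : Γ.Connected) (htetra : Tetravalent Γ)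
    (M : Subgroup (Equiv.Perm V)) (hhat : HalfArcTransitive Γ M) (u : V) :
    IsPGroup 2 (MulAction.stabilizer M u) := by
  classical
  have hsq := auxLocalSq Γ htetra M hhat
  intro x
  set g : Equiv.Perm V := ((x : M) : Equiv.Perm V) with hgdef
  have hgM : g ∈ M := ((x : M)).2
  have hgu : g u = u := x.2
  have hfix : ∀ v : V, ∃ k : ℕ, (g ^ 2 ^ k) v = v := by
    intro v
    obtain ⟨p⟩ := hconn.preconnected u v
    exact ⟨p.length, auxWalkFix Γ M hsq p g hgM hgu⟩
  choose f hf using hfix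
  set K := Finset.univ.sup f with hK
  have hall : ∀ v : V, (g ^ 2 ^ K) v = v := by
    intro v
    have hle : f v ≤ K := Finset.le_sup (Finset.mem_univ v)
    have : (2 : ℕ) ^ K = 2 ^ f v * 2 ^ (K - f v) := by
      rw [← pow_add]
      congr 1
      omega
    rw [this, pow_mul]
    exact perm_pow_fix _ _ (hf v) _
  have hone : g ^ 2 ^ K = 1 := Equiv.ext hall
  refine ⟨K, ?_⟩
  apply Subtype.ext
  apply Subtype.ext
  push_cast
  exact hone
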